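/- arXiv:1902.00590 — 3 statements merged into one kernel-verified Lean document; each statement's English description precedes it below -/
import Mathlib

section
/- The dual cone of the exponential cone K_exp equals {(x1,x2,x3) : x1 < 0, −x1·exp(x2/x1 − 1) ≤ x3} ∪ {(0,x2,x3) : x2 ≥ 0, x3 ≥ 0}. -/
def Kexp : Set (ℝ × ℝ × ℝ) :=
  {p | (0 < p.2.1 ∧ p.2.1 * Real.exp (p.1 / p.2.1) ≤ p.2.2) ∨
       (p.2.1 = 0 ∧ p.1 ≤ 0 ∧ 0 ≤ p.2.2)}

def dualCone (K : Set (ℝ × ℝ × ℝ)) : Set (ℝ × ℝ × ℝ) :=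
  {y | ∀ x ∈ K, 0 ≤ y.1 * x.1 + y.2.1 * x.2.1 + y.2.2 * x.2.2}

theorem Kexp_dual :
    dualCone Kexp =
      {p | (p.1 < 0 ∧ -p.1 * Real.exp (p.2.1 / p.1 - 1) ≤ p.2.2) ∨
           (p.1 = 0 ∧ 0 ≤ p.2.1 ∧ 0 ≤ p.2.2)} := by
  ext ⟨a, b, c⟩
  simp only [dualCone, Kexp, Set.mem_setOf_eq]
  constructor
  · intro h
    have ha : a ≤ 0 := by
      have := h (-1, 0, 0) (Or.inr ⟨rfl, by norm_num, le_refl 0⟩)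
      simp at this; linarith
    have hc : 0 ≤ c := by
      have := h (0, 0, 1) (Or.inr ⟨rfl, le_refl 0, by norm_num⟩)
      simp at this; linarith
    rcases ha.lt_or_eq with ha' | ha'
    · left
      refine ⟨ha', ?_⟩
      have hmem : ((1 - b/a, 1, Real.exp (1 - b/a)) : ℝ × ℝ × ℝ) ∈
          {p : ℝ × ℝ × ℝ | (0 < p.2.1 ∧ p.2.1 * Real.exp (p.1 / p.2.1) ≤ p.2.2) ∨
            (p.2.1 = 0 ∧ p.1 ≤ 0 ∧ 0 ≤ p.2.2)} := by
        left; constructor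
        · norm_num
        · simp [div_one]
      have hkey := h _ hmem
      simp only at hkey
      have hane : a ≠ 0 := ne_of_lt ha'
      have h1 : a * (1 - b/a) = a - b := by field_simp
      have h2 : Real.exp (b/a - 1) * Real.exp (1 - b/a) = 1 := by
        rw [← Real.exp_add]; ring_nf; exact Real.exp_zero
      have hE : 0 < Real.exp (1 - b/a) := Real.exp_pos _
      have hF : 0 < Real.exp (b/a - 1) := Real.exp_pos _
      -- hkey : 0 ≤ a * (1 - b/a) + b * 1 + c * exp (1 - b/a)
      -- i.e. 0 ≤ a + c * exp(1-b/a), so c * exp(1-b/a) ≥ -a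
      nlinarith [hkey, mul_pos hF hE]
    · right
      refine ⟨ha', ?_, hc⟩
      by_contra hb
      push_neg at hb
      have hpos : 0 < -b / (c + 1) := div_pos (by linarith) (by linarith)
      have hmem : ((Real.log (-b / (c + 1)), 1, -b / (c + 1)) : ℝ × ℝ × ℝ) ∈
          {p : ℝ × ℝ × ℝ | (0 < p.2.1 ∧ p.2.1 * Real.exp (p.1 / p.2.1) ≤ p.2.2) ∨
            (p.2.1 = 0 ∧ p.1 ≤ 0 ∧ 0 ≤ p.2.2)} := by
        left; constructor
        · norm_num
        · simp [div_one, Real.exp_log hpos]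
      have hkey := h _ hmem
      rw [ha'] at hkey
      simp only at hkey
      have hc1 : (0:ℝ) < c + 1 := by linarith
      have heq : b + c * (-b / (c + 1)) = b / (c + 1) := by field_simp; ring
      have hneg : b / (c + 1) < 0 := div_neg_of_neg_of_pos hb hc1
      nlinarith
  · rintro (⟨ha, hc⟩ | ⟨ha, hb, hc⟩) ⟨x1, x2, x3⟩ hx <;>
      rcases hx with ⟨hx2, hx3⟩ | ⟨hx2, hx1, hx3⟩ <;> simp only at *
    · -- a < 0, x2 > 0
      have hF : 0 < Real.exp (b / a - 1) := Real.exp_pos _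
      have hE : 0 < Real.exp (x1 / x2) := Real.exp_pos _
      have hcpos : 0 < c := lt_of_lt_of_le (by nlinarith) hc
      have hane : a ≠ 0 := ne_of_lt ha
      have hx2ne : x2 ≠ 0 := ne_of_gt hx2
      have h1 : x1 / x2 + b / a ≤ Real.exp (x1 / x2) * Real.exp (b / a - 1) := by
        have h0 := Real.add_one_le_exp (x1 / x2 + b / a - 1)
        have heq : Real.exp (x1 / x2 + b / a - 1)
            = Real.exp (x1 / x2) * Real.exp (b / a - 1) := by
          rw [← Real.exp_add]; ring_nf
        rw [heq] at h0
        linarith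
      have h2 : a * x2 * (x1 / x2 + b / a) = a * x1 + b * x2 := by
        field_simp
      have h3 : a * x2 * (Real.exp (x1 / x2) * Real.exp (b / a - 1)) ≤ a * x1 + b * x2 := by
        rw [← h2]
        apply mul_le_mul_of_nonpos_left h1
        nlinarith
      have h4 : c * (x2 * Real.exp (x1 / x2)) ≤ c * x3 :=
        mul_le_mul_of_nonneg_left hx3 hcpos.le
      have h5 : (-a * Real.exp (b / a - 1)) * (x2 * Real.exp (x1 / x2))
          ≤ c * (x2 * Real.exp (x1 / x2)) := by
        apply mul_le_mul_of_nonneg_right hc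
        positivity
      nlinarith
    · -- a < 0, x2 = 0
      have hF : 0 < Real.exp (b / a - 1) := Real.exp_pos _
      have hcpos : 0 < c := lt_of_lt_of_le (by nlinarith) hc
      rw [hx2]
      nlinarith [mul_nonneg hcpos.le hx3, mul_nonneg (neg_nonneg.mpr ha.le) (neg_nonneg.mpr hx1)]
    · -- a = 0, x2 > 0
      rw [ha]
      have hE : 0 < Real.exp (x1 / x2) := Real.exp_pos _
      have hx3' : 0 ≤ x3 := le_trans (by positivity) hx3
      nlinarith [mul_nonneg hb hx2.le, mul_nonneg hc hx3']
    · -- a = 0, x2 = 0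
      rw [ha, hx2]
      nlinarith [mul_nonneg hc hx3]
end

section
/- For a probability distribution Q on {1,2,...} with finite mean m and any l ∈ (0,1), the quantity −H(Q) − Σ_{i≥1} Q(i)·log(l^{i−1}(1−l)) is bounded below by m·KL(Ber(1/m) || Ber(1−l)). -/
/-!
Among distributions on `{1, 2, …}` with mean `m`, the geometric one with parameter `1/m` has the
largest entropy, `m·h(1/m)` with `h` the binary entropy; this is Gibbs' inequality against that
geometric distribution. The cross entropy of `Q` against the geometric reference `l^{i-1}(1-l)`
depends on `Q` only through its mean. Subtracting, the two logarithmic expressions in `m` combine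
into `m · KL(Ber(1/m) ‖ Ber(1-l))`.
Indices are shifted to start at `0`: the distributions below live on `ℕ`, with mean `μ = m - 1`.
-/

noncomputable def klBer (a b : ℝ) : ℝ :=
  a * Real.log (a / b) + (1 - a) * Real.log ((1 - a) / (1 - b))

open Real

theorem mul_log_sub_mul_log_le {p q : ℝ} (hp : 0 < p) (hq : 0 ≤ q) :
    q * log p - q * log q ≤ p - q := by
  rcases hq.eq_or_lt with rfl | hq
  · simpa using hp.le
  have hlog : log p - log q ≤ p / q - 1 := by
    rw [← log_div hp.ne' hq.ne']
    exact log_le_sub_one_of_pos (div_pos hp hq)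
  calc q * log p - q * log q = q * (log p - log q) := by ring
    _ ≤ q * (p / q - 1) := by gcongr
    _ = p - q := by field_simp

/-- Gibbs' inequality. -/
theorem tsum_mul_log_le_tsum_mul_log {ι : Type*} {p q : ι → ℝ} (hp : ∀ i, 0 < p i)
    (hq : ∀ i, 0 ≤ q i) (hp1 : HasSum p 1) (hq1 : HasSum q 1)
    (hqp : Summable fun i => q i * log (p i)) (hqq : Summable fun i => q i * log (q i)) :
    ∑' i, q i * log (p i) ≤ ∑' i, q i * log (q i) := by
  have := hasSum_le (fun i => mul_log_sub_mul_log_le (hp i) (hq i))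
    (hqp.hasSum.sub hqq.hasSum) (hp1.sub hq1)
  linarith

theorem hasSum_mul_log_pow_mul {q : ℕ → ℝ} {a b μ : ℝ} (ha : a ≠ 0) (hb : b ≠ 0)
    (hq1 : HasSum q 1) (hμ : HasSum (fun i : ℕ => (i : ℝ) * q i) μ) :
    HasSum (fun i : ℕ => q i * log (b ^ i * a)) (μ * log b + log a) := by
  have h := (hμ.mul_right (log b)).add (hq1.mul_right (log a))
  rw [one_mul] at h
  exact h.congr_fun fun i => by
    rw [log_mul (pow_ne_zero i hb) ha, log_pow]
    ring

theorem tsum_mul_log_eq_zero_of_mean_eq_zero {q : ℕ → ℝ} (hq : ∀ i, 0 ≤ q i)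
    (hq1 : HasSum q 1) (hμ : HasSum (fun i : ℕ => (i : ℝ) * q i) 0) :
    ∑' i, q i * log (q i) = 0 := by
  have hzero : ∀ i, i ≠ 0 → q i = 0 := by
    intro i hi
    have := congrFun ((hasSum_zero_iff_of_nonneg fun j => mul_nonneg j.cast_nonneg (hq j)).1 hμ) i
    simpa [hi] using this
  have hq0 : q 0 = 1 := (hasSum_single 0 hzero).unique hq1
  refine (tsum_congr fun i => ?_).trans tsum_zero
  rcases eq_or_ne i 0 with rfl | hi
  · simp [hq0]
  · simp [hzero i hi]

/-- The left side is the negative entropy of the geometric distribution on `ℕ` with mean `μ`,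
which maximizes entropy among distributions with that mean. -/
theorem mul_log_sub_mul_log_le_tsum_mul_log {q : ℕ → ℝ} {μ : ℝ} (hq : ∀ i, 0 ≤ q i)
    (hq1 : HasSum q 1) (hμ : HasSum (fun i : ℕ => (i : ℝ) * q i) μ)
    (hent : Summable fun i => q i * log (q i)) :
    μ * log μ - (μ + 1) * log (μ + 1) ≤ ∑' i, q i * log (q i) := by
  rcases (hμ.nonneg fun i => mul_nonneg i.cast_nonneg (hq i)).eq_or_lt with rfl | hμ0
  · simp [tsum_mul_log_eq_zero_of_mean_eq_zero hq hq1 hμ]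
  set r := μ / (μ + 1)
  have hr0 : 0 ≤ r := by positivity
  have hr1 : r < 1 := (div_lt_one (by positivity)).2 (lt_add_one μ)
  have hgeom : HasSum (fun i : ℕ => r ^ i * (μ + 1)⁻¹) 1 := by
    have h1r : 1 - r = (μ + 1)⁻¹ := by
      rw [one_sub_div (by positivity), add_sub_cancel_left, one_div]
    have h := (hasSum_geometric_of_lt_one hr0 hr1).mul_right (μ + 1)⁻¹
    rwa [h1r, inv_inv, mul_inv_cancel₀ (by positivity)] at h
  have hcross := hasSum_mul_log_pow_mul (a := (μ + 1)⁻¹) (b := r)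
    (inv_ne_zero (by positivity)) (by positivity) hq1 hμ
  have hcross_eq : μ * log r + log (μ + 1)⁻¹ = μ * log μ - (μ + 1) * log (μ + 1) := by
    rw [log_div hμ0.ne' (by positivity), log_inv]
    ring
  rw [← hcross_eq, ← hcross.tsum_eq]
  exact tsum_mul_log_le_tsum_mul_log (fun i => by positivity) hq hgeom hq1 hcross.summable hent

theorem mul_klBer_one_div_one_sub {m l : ℝ} (hm : m ≠ 0) (hl0 : l ≠ 0) (hl1 : l ≠ 1) :
    m * klBer (1 / m) (1 - l) =
      (m - 1) * log (m - 1) - m * log m - ((m - 1) * log l + log (1 - l)) := by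
  have hl1' : 1 - l ≠ 0 := sub_ne_zero.2 hl1.symm
  have hfirst : m * (1 / m) * log (1 / m / (1 - l)) = -log m - log (1 - l) := by
    rw [log_div (by simpa using hm) hl1', one_div, log_inv, mul_inv_cancel₀ hm]
    ring
  have hsecond : m * (1 - 1 / m) * log ((1 - 1 / m) / (1 - (1 - l))) =
      (m - 1) * (log (m - 1) - log m - log l) := by
    have hcoef : m * (1 - 1 / m) = m - 1 := by field_simp
    rw [hcoef]
    rcases eq_or_ne m 1 with rfl | hm1
    · simp
    rw [sub_sub_cancel, one_sub_div hm, log_div (by positivity) hl0, log_div (sub_ne_zero.2 hm1) hm]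
  rw [klBer, mul_add, ← mul_assoc, ← mul_assoc, hfirst, hsecond]
  ring

theorem entropy_bound_gives_kl_lower_bound_general (l m : ℝ)
    (hl : 0 < l) (hl' : l < 1) (hm : 1 ≤ m)
    (Q : ℕ → ℝ) (hQnn : ∀ i, 0 ≤ Q i) (hQsum : (∑' i, Q i) = 1)
    (hmean : (∑' i : ℕ, ((i : ℝ) + 1) * Q i) = m)
    (hent : Summable (fun i => Q i * Real.log (Q i))) :
    m * klBer (1 / m) (1 - l) ≤
      (∑' i, Q i * Real.log (Q i)) - ∑' i : ℕ, Q i * Real.log (l ^ i * (1 - l)) := by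
  have hQ1 : HasSum Q 1 := by
    refine hQsum ▸ Summable.hasSum (by_contra fun h => ?_)
    simp [tsum_eq_zero_of_not_summable h] at hQsum
  have hμ : HasSum (fun i : ℕ => (i : ℝ) * Q i) (m - 1) := by
    have hsummable : Summable fun i : ℕ => ((i : ℝ) + 1) * Q i := by
      by_contra h
      rw [tsum_eq_zero_of_not_summable h] at hmean
      linarith
    exact ((hmean ▸ hsummable.hasSum).sub hQ1).congr_fun fun i => by ring
  have hmaxent := mul_log_sub_mul_log_le_tsum_mul_log hQnn hQ1 hμ hent
  rw [sub_add_cancel] at hmaxent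
  rw [(hasSum_mul_log_pow_mul (sub_ne_zero.2 hl'.ne') hl.ne' hQ1 hμ).tsum_eq,
    mul_klBer_one_div_one_sub (by linarith) hl.ne' hl'.ne]
  linarith

theorem entropy_bound_gives_kl_lower_bound (l m : ℝ)
    (hl : 0 < l) (hl' : l < 1) (hm : 1 ≤ m)
    (Q : ℕ → ℝ) (hQnn : ∀ i, 0 ≤ Q i) (hQsum : (∑' i, Q i) = 1)
    (hmean : (∑' i : ℕ, ((i : ℝ) + 1) * Q i) = m)
    (hent : Summable (fun i => Q i * Real.log (Q i)))
    (hsum : Summable (fun i : ℕ => Q i * Real.log (l ^ i * (1 - l)))) :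
    m * klBer (1 / m) (1 - l) ≤
      (∑' i, Q i * Real.log (Q i)) - ∑' i : ℕ, Q i * Real.log (l ^ i * (1 - l)) :=
  entropy_bound_gives_kl_lower_bound_general l m hl hl' hm Q hQnn hQsum hmean hent
end

section
/- The function x ↦ KL(Ber(1/x) || Ber(1−l)) is monotonically increasing in x on the interval [1/(1−l), ∞), for fixed l ∈ (0,1). -/
/-! The derivative of `a ↦ KL(Ber a ‖ Ber b)` is `log (a / b) - log ((1 - a) / (1 - b))`, which is
nonpositive for `0 < a ≤ b`, so the divergence decreases in `a` on `(0, b]`. Since `x ↦ 1 / x`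
reverses order and maps `[1 / (1 - l), ∞)` into `(0, 1 - l]`, the composite is monotone. -/

open Real Set

lemma hasDerivAt_mul_log_div_const {a c : ℝ} (ha : a ≠ 0) (hc : c ≠ 0) :
    HasDerivAt (fun x => x * log (x / c)) (log (a / c) + 1) a := by
  have hlog : HasDerivAt (fun x => log (x / c)) (1 / c / (a / c)) a :=
    ((hasDerivAt_id' a).div_const c).log (div_ne_zero ha hc)
  refine ((hasDerivAt_id' a).mul hlog).congr_deriv ?_
  field_simp

lemma klBer_hasDerivAt {a b : ℝ} (ha₀ : a ≠ 0) (ha₁ : a ≠ 1) (hb₀ : b ≠ 0) (hb₁ : b ≠ 1) :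
    HasDerivAt (fun x => klBer x b) (log (a / b) - log ((1 - a) / (1 - b))) a := by
  have h₀ := hasDerivAt_mul_log_div_const ha₀ hb₀
  have h₁ : HasDerivAt (fun x => (1 - x) * log ((1 - x) / (1 - b)))
      ((log ((1 - a) / (1 - b)) + 1) * -1) a :=
    (hasDerivAt_mul_log_div_const (sub_ne_zero.2 ha₁.symm) (sub_ne_zero.2 hb₁.symm)).comp a
      ((hasDerivAt_id' a).const_sub 1)
  refine (h₀.add h₁).congr_deriv ?_
  ring

lemma klBer_antitoneOn_Ioc {b : ℝ} (hb₀ : 0 < b) (hb₁ : b < 1) :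
    AntitoneOn (fun a => klBer a b) (Ioc 0 b) := by
  have hderiv : ∀ a ∈ Ioc 0 b,
      HasDerivAt (fun x => klBer x b) (log (a / b) - log ((1 - a) / (1 - b))) a :=
    fun a ⟨ha₀, hab⟩ => klBer_hasDerivAt ha₀.ne' (hab.trans_lt hb₁).ne hb₀.ne' hb₁.ne
  refine antitoneOn_of_hasDerivWithinAt_nonpos (convex_Ioc 0 b)
    (fun a ha => (hderiv a ha).continuousAt.continuousWithinAt)
    (fun a ha => (hderiv a (interior_subset ha)).hasDerivWithinAt) fun a ha => ?_
  obtain ⟨ha₀, hab⟩ := interior_subset ha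
  have h₁ : log (a / b) ≤ 0 := log_nonpos (by positivity) ((div_le_one hb₀).2 hab)
  have h₂ : 0 ≤ log ((1 - a) / (1 - b)) :=
    log_nonneg ((one_le_div (by linarith)).2 (by linarith))
  linarith

lemma mapsTo_one_div_Ici_Ioc {c : ℝ} (hc : 0 < c) :
    MapsTo (fun x : ℝ => 1 / x) (Ici (1 / c)) (Ioc 0 c) := fun x hx => by
  have hx₀ : 0 < x := (one_div_pos.2 hc).trans_le hx
  refine ⟨one_div_pos.2 hx₀, ?_⟩
  simpa using one_div_le_one_div_of_le (one_div_pos.2 hc) hx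

theorem klBer_inv_monotone (l : ℝ) (hl : 0 < l) (hl' : l < 1) :
    MonotoneOn (fun x : ℝ => klBer (1 / x) (1 - l)) (Set.Ici (1 / (1 - l))) := by
  have h1l : 0 < 1 - l := by linarith
  have hmaps := mapsTo_one_div_Ici_Ioc h1l
  intro x hx y hy hxy
  have hx₀ : 0 < x := (one_div_pos.2 h1l).trans_le hx
  exact klBer_antitoneOn_Ioc h1l (by linarith) (hmaps hy) (hmaps hx)
    (one_div_le_one_div_of_le hx₀ hxy)
end
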